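/- Let R be a unital non-associative ring, G a monoid, π a G-derivation on R, and S = R[G;π] the Ore monoid ring. If a,b ∈ G, the map π^a_b is left R^G-linear, and π is commutative (π^a_b ∘ π^c_d = π^c_d ∘ π^a_b for all a,b,c,d ∈ G), then the extension π̃^a_b : S → S is left S^G-linear, i.e. π̃^a_b(v·u) = v·π̃^a_b(u) for all v ∈ S^G and u ∈ S. -/

import Mathlib

open scoped Classical

/-! Common framework: Ore monoid rings `R[G;π]` over a unital non-associative ring `R`
and a monoid `G`.  A `G`-derivation `π = {π^a_b}` is encoded as a map
`π : G → R → (G →₀ R)`, where `π a r b = π^a_b(r)`; axiom (D0) (finite support in `b`)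
is built into the `Finsupp` encoding.  The Ore monoid ring `S = R[G;π]` is the
additive group `G →₀ R` of finitely supported formal sums `Σ r_a xᵃ`
(with `Finsupp.single a r` representing `r xᵃ`), equipped with the
multiplication `GDeriv.mul` below. -/

/-- A two-sided ideal with respect to a (possibly non-associative, non-unital)
multiplication `m` on an additive group `A`. -/
structure IsIdealWith {A : Type*} [AddCommGroup A] (m : A → A → A) (J : Set A) : Prop where
  zero_mem : (0 : A) ∈ J
  add_mem : ∀ {x y : A}, x ∈ J → y ∈ J → x + y ∈ J
  neg_mem : ∀ {x : A}, x ∈ J → -x ∈ J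
  mul_mem_left : ∀ (r : A) {x : A}, x ∈ J → m r x ∈ J
  mul_mem_right : ∀ {x : A} (r : A), x ∈ J → m x r ∈ J

/-- The subset `F` of `A` is a field with respect to the multiplication `m` with
identity `one`: it is a commutative unital subring in which every nonzero element
has a multiplicative inverse. -/
def IsFieldWith {A : Type*} [AddCommGroup A] (m : A → A → A) (one : A) (F : Set A) : Prop :=
  one ∈ F ∧ (∀ x ∈ F, ∀ y ∈ F, x + y ∈ F) ∧ (∀ x ∈ F, -x ∈ F) ∧
  (∀ x ∈ F, ∀ y ∈ F, m x y ∈ F) ∧ (∀ x ∈ F, ∀ y ∈ F, m x y = m y x) ∧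
  (∀ x ∈ F, x ≠ 0 → ∃ y ∈ F, m x y = one ∧ m y x = one)

/-- A `G`-derivation on `R`: axioms (D0)–(D4).  Here `π a r b` denotes `π^a_b(r)`,
and (D0) holds by the finite support of `π a r : G →₀ R`. -/
structure GDeriv (R : Type*) [NonAssocRing R] (G : Type*) [Monoid G] where
  /-- the family of maps; `π a r b = π^a_b(r)` -/
  π : G → R → (G →₀ R)
  /-- (D1): `π^e_e = id` and `π^e_a = 0` for `a ≠ e` -/
  d1 : ∀ r : R, π 1 r = Finsupp.single 1 r
  /-- (D2): `π^a_b(1) = δ_{a,b}` -/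
  d2 : ∀ a : G, π a (1 : R) = Finsupp.single a (1 : R)
  /-- (D3): each `π^a_b` is additive -/
  d3 : ∀ (a : G) (r s : R), π a (r + s) = π a r + π a s
  /-- (D4): `π^{ab}_c = Σ_{df = c} π^a_d ∘ π^b_f` -/
  d4 : ∀ (a b : G) (r : R),
    π (a * b) r = (π b r).sum fun f s => (π a s).sum fun d t => Finsupp.single (d * f) t

namespace GDeriv

variable {R : Type*} [NonAssocRing R] {G : Type*} [Monoid G] (P : GDeriv R G)

/-- The multiplication of the Ore monoid ring `S = R[G;π]` on `G →₀ R`: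
the biadditive extension of `(r xᵃ)(s xᵇ) = Σ_c r π^a_c(s) x^{cb}`. -/
noncomputable def mul (u v : G →₀ R) : G →₀ R :=
  u.sum fun a r => v.sum fun b s => (P.π a s).sum fun c t => Finsupp.single (c * b) (r * t)

/-- The multiplicative identity `1·xᵉ` of `S`. -/
noncomputable def one (_P : GDeriv R G) : G →₀ R := Finsupp.single 1 1

/-- `R^G = {r ∈ R : π^a_b(r) = δ_{a,b} r}`. -/
def fixed : Set R := {r | ∀ a : G, P.π a r = Finsupp.single a r}

/-- `S^G = Σ_a R^G xᵃ`, the elements of `S` all of whose coefficients lie in `R^G`. -/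
def fixedS : Set (G →₀ R) := {u | ∀ c : G, u c ∈ P.fixed}

/-- (D7): every `π^a_b` is left `R^G`-linear. -/
def LeftLinear : Prop := ∀ a b : G, ∀ s ∈ P.fixed, ∀ r : R, P.π a (s * r) b = s * P.π a r b

/-- (D8): every `π^a_b` is right `R^G`-linear. -/
def RightLinear : Prop := ∀ a b : G, ∀ r : R, ∀ s ∈ P.fixed, P.π a (r * s) b = P.π a r b * s

/-- `π` is strong if (D7) or (D8) holds. -/
def Strong : Prop := P.LeftLinear ∨ P.RightLinear

/-- (D6): `π^a_a = id_R` for all `a ∈ G` (i.e. `π` is unital). -/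
def Unital : Prop := ∀ (a : G) (r : R), P.π a r a = r

/-- `π` is commutative: `π^a_b ∘ π^c_d = π^c_d ∘ π^a_b`. -/
def Commutes : Prop := ∀ (a b c d : G) (r : R), P.π a (P.π c r d) b = P.π c (P.π a r b) d

/-- `π` is well-ordered: there is a well-order on `G` whose strict part `lt`
satisfies `π^a_b = 0` whenever `a ≺ b`. -/
def WellOrdered : Prop :=
  ∃ lt : G → G → Prop, IsWellOrder G lt ∧ ∀ a b : G, lt a b → ∀ r : R, P.π a r b = 0

/-- The extension `π̃^a_b : S → S`, `π̃^a_b(Σ_c r_c x^c) = Σ_c π^a_b(r_c) x^c`. -/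
noncomputable def ext (a b : G) (u : G →₀ R) : G →₀ R := u.sum fun c r => Finsupp.single c (P.π a r b)

/-- The commutator `[u,v] = uv - vu` in `S`. -/
noncomputable def commS (u v : G →₀ R) : G →₀ R := P.mul u v - P.mul v u

/-- The associator `(u,v,w) = (uv)w - u(vw)` in `S`. -/
noncomputable def assocS (u v w : G →₀ R) : G →₀ R := P.mul (P.mul u v) w - P.mul u (P.mul v w)

/-- The left nucleus `N_l(S)`. -/
def Nl : Set (G →₀ R) := {u | ∀ v w, P.assocS u v w = 0}

/-- The middle nucleus `N_m(S)`. -/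
def Nm : Set (G →₀ R) := {u | ∀ v w, P.assocS v u w = 0}

/-- The right nucleus `N_r(S)`. -/
def Nr : Set (G →₀ R) := {u | ∀ v w, P.assocS v w u = 0}

/-- The commuter `C(S)`. -/
def CS : Set (G →₀ R) := {u | ∀ v, P.mul u v = P.mul v u}

/-- The center `Z(S) = C(S) ∩ N_l(S) ∩ N_m(S) ∩ N_r(S)`. -/
def Z : Set (G →₀ R) := P.CS ∩ (P.Nl ∩ P.Nm ∩ P.Nr)

/-- `Z(S)^G = {s ∈ Z(S) : π̃^a_b(s) = δ_{a,b} s}`. -/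
def ZG : Set (G →₀ R) :=
  {s | s ∈ P.Z ∧ ∀ a b : G, P.ext a b s = if a = b then s else 0}

/-- `R` is `G`-simple: `{0}` and `R` are the only `G`-invariant ideals of `R`. -/
def RSimple : Prop :=
  ∀ J : Set R, IsIdealWith (· * ·) J → (∀ a b : G, ∀ r ∈ J, P.π a r b ∈ J) →
    J = {0} ∨ J = Set.univ

/-- `S` is `G`-simple: `{0}` and `S` are the only ideals of `S` invariant under all `π̃^a_b`. -/
def SSimple : Prop :=
  ∀ J : Set (G →₀ R), IsIdealWith P.mul J → (∀ a b : G, ∀ u ∈ J, P.ext a b u ∈ J) →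
    J = {0} ∨ J = Set.univ

end GDeriv

/-! Both sides are additive in `u`, so it suffices to take `u = s xᵈ`, where
`v (s xᵈ) = Σ_{c,e} v_c π^c_e(s) x^{ed}`. Applying `π^a_b` coefficientwise, left `R^G`-linearity
pulls out `v_c ∈ R^G`, and commutativity turns `π^a_b(π^c_e(s))` into `π^c_e(π^a_b(s))`, the
corresponding coefficient of `v (π^a_b(s) xᵈ)`. -/

namespace GDeriv

variable {R : Type*} [NonAssocRing R] {G : Type*} [Monoid G] (P : GDeriv R G)

noncomputable def piHom (a : G) : R →+ (G →₀ R) := AddMonoidHom.mk' (P.π a) (P.d3 a)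

noncomputable def piApplyHom (a b : G) : R →+ R := (Finsupp.applyAddHom b).comp (P.piHom a)

lemma piApplyHom_apply (a b : G) (r : R) : P.piApplyHom a b r = P.π a r b := rfl

lemma pi_zero (a : G) : P.π a 0 = 0 := map_zero (P.piHom a)

lemma ext_eq_mapRange (a b : G) :
    P.ext a b = Finsupp.mapRange.addMonoidHom (P.piApplyHom a b) := by
  ext u c
  simp only [ext, Finsupp.sum_apply, Finsupp.single_apply, Finsupp.sum_ite_eq',
    Finsupp.mem_support_iff, ne_eq, ite_not, Finsupp.mapRange.addMonoidHom_apply,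
    Finsupp.mapRange_apply, piApplyHom_apply, ite_eq_right_iff]
  intro hc
  rw [hc, pi_zero, Finsupp.zero_apply]

lemma ext_single (a b c : G) (r : R) :
    P.ext a b (Finsupp.single c r) = Finsupp.single c (P.π a r b) := by
  rw [ext_eq_mapRange, Finsupp.mapRange.addMonoidHom_apply, Finsupp.mapRange_single,
    piApplyHom_apply]

lemma ext_pi_of_commutes (hcomm : P.Commutes) (a b c : G) (s : R) :
    P.ext a b (P.π c s) = P.π c (P.π a s b) := by
  ext e
  simp only [ext_eq_mapRange, Finsupp.mapRange.addMonoidHom_apply, Finsupp.mapRange_apply,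
    piApplyHom_apply]
  exact hcomm a b c e s

lemma ext_sum_single_mul {a b : G} {r : R} (hr : ∀ x : R, P.π a (r * x) b = r * P.π a x b)
    (d : G) (f : G →₀ R) :
    P.ext a b (f.sum fun e t => Finsupp.single (e * d) (r * t))
      = (P.ext a b f).sum fun e t => Finsupp.single (e * d) (r * t) := by
  rw [ext_eq_mapRange, map_finsuppSum, Finsupp.mapRange.addMonoidHom_apply,
    Finsupp.sum_mapRange_index fun e => by rw [mul_zero, Finsupp.single_zero]]
  refine Finsupp.sum_congr fun e _ => ?_
  rw [Finsupp.mapRange.addMonoidHom_apply, Finsupp.mapRange_single, piApplyHom_apply,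
    piApplyHom_apply, hr]

lemma mul_zero_right (v : G →₀ R) : P.mul v 0 = 0 := by
  simp only [mul, Finsupp.sum_zero_index, Finsupp.sum_fun_zero]

lemma mul_add_right (v u u' : G →₀ R) :
    P.mul v (u + u') = P.mul v u + P.mul v u' := by
  unfold mul
  rw [← Finsupp.sum_add]
  refine Finsupp.sum_congr fun c _ =>
    Finsupp.sum_add_index' (fun d => by simp [pi_zero]) fun d s s' => ?_
  rw [P.d3]
  exact Finsupp.sum_add_index' (fun e => by simp) fun e t t' => by rw [mul_add, Finsupp.single_add]

lemma mul_single_right (v : G →₀ R) (d : G) (s : R) :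
    P.mul v (Finsupp.single d s)
      = v.sum fun c r => (P.π c s).sum fun e t => Finsupp.single (e * d) (r * t) :=
  Finsupp.sum_congr fun c _ => Finsupp.sum_single_index (by simp [pi_zero])

lemma ext_mul_single {a b : G} (h : ∀ s ∈ P.fixed, ∀ r : R, P.π a (s * r) b = s * P.π a r b)
    (hcomm : P.Commutes) {v : G →₀ R} (hv : v ∈ P.fixedS) (d : G) (s : R) :
    P.ext a b (P.mul v (Finsupp.single d s)) = P.mul v (P.ext a b (Finsupp.single d s)) := by
  rw [ext_single, mul_single_right, mul_single_right, ext_eq_mapRange,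
    map_finsuppSum, ← ext_eq_mapRange]
  refine Finsupp.sum_congr fun c _ => ?_
  rw [P.ext_sum_single_mul (h _ (hv c)), ext_pi_of_commutes P hcomm]

end GDeriv

/-- If `a,b ∈ G`, `π^a_b` is left `R^G`-linear, and `π` is
commutative, then `π̃^a_b` is left `S^G`-linear. -/
theorem stmt11 {R : Type*} [NonAssocRing R] {G : Type*} [Monoid G]
    (P : GDeriv R G) (a b : G)
    (h : ∀ s ∈ P.fixed, ∀ r : R, P.π a (s * r) b = s * P.π a r b)
    (hcomm : P.Commutes) :
    ∀ v ∈ P.fixedS, ∀ u : G →₀ R,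
      P.ext a b (P.mul v u) = P.mul v (P.ext a b u) := by
  intro v hv u
  induction u using Finsupp.induction_linear with
  | zero => simp only [P.mul_zero_right, P.ext_eq_mapRange, map_zero]
  | add u u' hu hu' =>
    rw [P.mul_add_right, P.ext_eq_mapRange, map_add, map_add, P.mul_add_right,
      ← P.ext_eq_mapRange, hu, hu']
  | single d s => exact P.ext_mul_single h hcomm hv d s
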